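/- arXiv:2309.07895 — 4 statements merged into one kernel-verified Lean document; each statement's English description precedes it below -/
import Mathlib

section
/- Let σ > 0, μ ≥ 0, r̂ > 0. Suppose A, I, R : [0,∞) → ℝ are continuous, A and I are integrable on [0,∞), I and R are differentiable with I′(t) = σ·A(t) − r̂·I(t) and R′(t) = μ·A(t) + r̂·I(t) for all t ≥ 0, R(0) = 0, I(t) → 0 as t → ∞, and R(t) → R∞ as t → ∞. Then ∫₀^∞ (A(t) + I(t)) dt = R∞·(σ + r̂)/(r̂·(σ + μ)) − ((r̂ − μ)/(r̂·(σ + μ)))·I(0). -/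
open MeasureTheory Filter

/-- Paper Eq. (A.5): with `I' = σ·A − r̂·I`, `R' = μ·A + r̂·I`, `R(0) = 0`,
`I(t) → 0` and `R(t) → R∞`, the cumulative infection burden is
`∫₀^∞ (A + I) = R∞·(σ + r̂)/(r̂·(σ + μ)) − ((r̂ − μ)/(r̂·(σ + μ)))·I(0)`. -/
theorem integral_A_add_I_eq
    (σ μ rhat : ℝ) (hσ : 0 < σ) (hμ : 0 ≤ μ) (hr : 0 < rhat)
    (A I R : ℝ → ℝ) (Rinf : ℝ)
    (hAc : ContinuousOn A (Set.Ici 0))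
    (hIc : ContinuousOn I (Set.Ici 0))
    (hRc : ContinuousOn R (Set.Ici 0))
    (hAint : IntegrableOn A (Set.Ici 0))
    (hIint : IntegrableOn I (Set.Ici 0))
    (hI' : ∀ t : ℝ, 0 ≤ t → HasDerivAt I (σ * A t - rhat * I t) t)
    (hR' : ∀ t : ℝ, 0 ≤ t → HasDerivAt R (μ * A t + rhat * I t) t)
    (hR0 : R 0 = 0)
    (hIlim : Tendsto I atTop (nhds 0))
    (hRlim : Tendsto R atTop (nhds Rinf)) :
    ∫ t in Set.Ici (0:ℝ), (A t + I t)
      = Rinf * (σ + rhat) / (rhat * (σ + μ))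
        - ((rhat - μ) / (rhat * (σ + μ))) * I 0 := by
  have hAint' : IntegrableOn A (Set.Ioi 0) := hAint.mono_set Set.Ioi_subset_Ici_self
  have hIint' : IntegrableOn I (Set.Ioi 0) := hIint.mono_set Set.Ioi_subset_Ici_self
  have h1int : IntegrableOn (fun t => σ * A t - rhat * I t) (Set.Ioi 0) :=
    (hAint'.const_mul σ).sub (hIint'.const_mul rhat)
  have h2int : IntegrableOn (fun t => μ * A t + rhat * I t) (Set.Ioi 0) :=
    (hAint'.const_mul μ).add (hIint'.const_mul rhat)
  have eq1 : ∫ t in Set.Ioi (0:ℝ), (σ * A t - rhat * I t) = 0 - I 0 :=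
    MeasureTheory.integral_Ioi_of_hasDerivAt_of_tendsto'
      (fun x hx => hI' x hx) h1int hIlim
  have eq2 : ∫ t in Set.Ioi (0:ℝ), (μ * A t + rhat * I t) = Rinf - R 0 :=
    MeasureTheory.integral_Ioi_of_hasDerivAt_of_tendsto'
      (fun x hx => hR' x hx) h2int hRlim
  rw [MeasureTheory.integral_sub (hAint'.const_mul σ) (hIint'.const_mul rhat),
    integral_const_mul, integral_const_mul] at eq1
  rw [MeasureTheory.integral_add (hAint'.const_mul μ) (hIint'.const_mul rhat),
    integral_const_mul, integral_const_mul, hR0] at eq2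
  rw [MeasureTheory.integral_Ici_eq_integral_Ioi,
    MeasureTheory.integral_add hAint' hIint']
  have hne : rhat * (σ + μ) ≠ 0 := by positivity
  field_simp
  linear_combination (rhat - μ) * eq1 + (rhat + σ) * eq2
end

section
/- Let β̂τ, β̂ᵥ, N⁰ᵥ, μ̂ᵥ, r̂, σ, μτ, Nτ be positive reals, and let K be the real 3×3 matrix with K₁₃ = β̂τ/μ̂ᵥ, K₃₁ = β̂ᵥ·N⁰ᵥ·(σ + r̂)/(Nτ·r̂·(σ + μτ)), K₃₂ = β̂ᵥ·N⁰ᵥ/(r̂·Nτ), and all other entries 0. Then the characteristic polynomial of K is X³ − R₀²·X, where R₀² = (β̂τ/(σ + μτ))·(β̂ᵥ/μ̂ᵥ)·(N⁰ᵥ/Nτ)·(σ/r̂ + 1). -/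
open Polynomial

theorem charpoly_aux (a b c : ℝ) (K : Matrix (Fin 3) (Fin 3) ℝ)
    (hK : K = Matrix.of ![![0,0,a],![0,0,0],![b,c,0]]) :
    K.charpoly = X^3 - C (a*b) * X := by
  subst hK
  rw [Matrix.charpoly, Matrix.det_fin_three]
  simp [Matrix.charmatrix_apply, Matrix.diagonal, Matrix.vecHead, Matrix.vecTail]
  ring

/-- The characteristic polynomial of the next-generation matrix `K` of a
single isolated orchard is `X³ − R₀²·X`, with `R₀²` as in paper Eq. (16). -/
theorem charpoly_NGM_single_orchard
    (βτ βv N0v μv rhat σ μτ Nτ : ℝ)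
    (hβτ : 0 < βτ) (hβv : 0 < βv) (hN0v : 0 < N0v) (hμv : 0 < μv)
    (hr : 0 < rhat) (hσ : 0 < σ) (hμτ : 0 < μτ) (hNτ : 0 < Nτ)
    (K : Matrix (Fin 3) (Fin 3) ℝ)
    (hK : K = Matrix.of
      ![![0, 0, βτ / μv],
        ![0, 0, 0],
        ![βv * N0v * (σ + rhat) / (Nτ * rhat * (σ + μτ)),
          βv * N0v / (rhat * Nτ), 0]]) :
    K.charpoly
      = X ^ 3
        - C (βτ / (σ + μτ) * (βv / μv) * (N0v / Nτ) * (σ / rhat + 1)) * X := by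
  rw [charpoly_aux _ _ _ _ hK]
  congr 2
  have h1 : (0:ℝ) < σ + μτ := by linarith
  field_simp
end

section
/- Let β̂τ, β̂ᵥ, N⁰ᵥ, μ̂ᵥ, r̂, σ, μτ, Nτ be positive reals, and let K be the real 3×3 matrix with K₁₃ = β̂τ/μ̂ᵥ, K₃₁ = β̂ᵥ·N⁰ᵥ·(σ + r̂)/(Nτ·r̂·(σ + μτ)), K₃₂ = β̂ᵥ·N⁰ᵥ/(r̂·Nτ), and all other entries 0. Then the set of complex eigenvalues of K is {0, R₀, −R₀}, where R₀ = √((β̂τ/(σ + μτ))·(β̂ᵥ/μ̂ᵥ)·(N⁰ᵥ/Nτ)·(σ/r̂ + 1)); in particular the maximum of the moduli of the eigenvalues of K (its spectral radius) equals R₀. -/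
/-! The second row of `K` vanishes, so the entry `K₃₂` never enters the characteristic
polynomial, which is `z (z² - K₁₃ K₃₁)`; and `K₁₃ K₃₁` is exactly the radicand `R₀²` of Eq. (16). -/

open Matrix Polynomial

theorem Matrix.eval_charpoly_fin_three_of_support_13_31_32 {R : Type*} [CommRing R]
    (a b c z : R) :
    (!![0, 0, a; 0, 0, 0; b, c, 0] : Matrix (Fin 3) (Fin 3) R).charpoly.eval z =
      z * (z ^ 2 - a * b) := by
  rw [eval_charpoly, det_fin_three]
  simp only [scalar_apply, sub_apply, diagonal_apply_eq, diagonal_apply_ne, of_apply, cons_val',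
    cons_val_zero, cons_val_one, cons_val, cons_val_fin_one, ne_eq, Fin.reduceEq, not_false_eq_true,
    Fin.isValue]
  ring

theorem Matrix.spectrum_fin_three_of_support_13_31_32 {𝕜 : Type*} [Field 𝕜] {a b r : 𝕜}
    (c : 𝕜) (hab : a * b = r ^ 2) :
    spectrum 𝕜 (!![0, 0, a; 0, 0, 0; b, c, 0] : Matrix (Fin 3) (Fin 3) 𝕜) = {0, r, -r} := by
  ext z
  have hfactor : z * (z ^ 2 - r ^ 2) = z * (z - r) * (z - -r) := by ring
  rw [mem_spectrum_iff_isRoot_charpoly, IsRoot.def,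
    eval_charpoly_fin_three_of_support_13_31_32, hab, hfactor]
  simp only [mul_eq_zero, sub_eq_zero, Set.mem_insert_iff, Set.mem_singleton_iff, or_assoc]

theorem isGreatest_norm_image_zero_self_neg {E : Type*} [SeminormedAddCommGroup E] (x : E) :
    IsGreatest (norm '' ({0, x, -x} : Set E)) ‖x‖ := by
  simpa [Set.image_insert_eq, norm_neg] using isGreatest_pair (a := (0 : ℝ)) (b := ‖x‖)

/-- The complex eigenvalues of the next-generation matrix `K` of a single
isolated orchard are exactly `{0, R₀, −R₀}` with `R₀` as in paper Eq. (16),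
and its spectral radius is `R₀`. -/
theorem eigenvalues_NGM_single_orchard
    (βτ βv N0v μv rhat σ μτ Nτ : ℝ)
    (hβτ : 0 < βτ) (hβv : 0 < βv) (hN0v : 0 < N0v) (hμv : 0 < μv)
    (hr : 0 < rhat) (hσ : 0 < σ) (hμτ : 0 < μτ) (hNτ : 0 < Nτ)
    (K : Matrix (Fin 3) (Fin 3) ℝ)
    (hK : K = Matrix.of
      ![![0, 0, βτ / μv],
        ![0, 0, 0],
        ![βv * N0v * (σ + rhat) / (Nτ * rhat * (σ + μτ)),
          βv * N0v / (rhat * Nτ), 0]])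
    (R₀ : ℝ)
    (hR₀ : R₀ = Real.sqrt
      (βτ / (σ + μτ) * (βv / μv) * (N0v / Nτ) * (σ / rhat + 1))) :
    spectrum ℂ (K.map (Complex.ofReal ·)) = {0, (R₀ : ℂ), (-R₀ : ℂ)} ∧
    IsGreatest ((‖·‖ : ℂ → ℝ) '' spectrum ℂ (K.map (Complex.ofReal ·))) R₀ := by
  have hKC : K.map (Complex.ofReal ·) =
      !![0, 0, ((βτ / μv : ℝ) : ℂ); 0, 0, 0;
        ((βv * N0v * (σ + rhat) / (Nτ * rhat * (σ + μτ)) : ℝ) : ℂ),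
        ((βv * N0v / (rhat * Nτ) : ℝ) : ℂ), 0] := by
    subst hK
    ext i j
    fin_cases i <;> fin_cases j <;> simp
  have hR₀sq : βτ / μv * (βv * N0v * (σ + rhat) / (Nτ * rhat * (σ + μτ))) = R₀ ^ 2 := by
    rw [hR₀, Real.sq_sqrt (by positivity)]
    field_simp
  have hspec : spectrum ℂ (K.map (Complex.ofReal ·)) = {0, (R₀ : ℂ), (-R₀ : ℂ)} := by
    rw [hKC]
    exact spectrum_fin_three_of_support_13_31_32 _ (by exact_mod_cast hR₀sq)
  refine ⟨hspec, ?_⟩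
  have hR₀_nonneg : 0 ≤ R₀ := hR₀ ▸ Real.sqrt_nonneg _
  rw [hspec]
  convert isGreatest_norm_image_zero_self_neg (R₀ : ℂ)
  exact (Complex.norm_of_nonneg hR₀_nonneg).symm
end

section
/- Let σ > 0, μ ≥ 0, r̂ > 0. Suppose A, I, R : [0,∞) → ℝ are continuous, A and I are integrable on [0,∞), I and R are differentiable with I′(t) = σ·A(t) − r̂·I(t) and R′(t) = μ·A(t) + r̂·I(t) for all t ≥ 0, R(0) = 0, I(0) = 0, I(t) → 0 as t → ∞, and R(t) → R∞ as t → ∞. Then ∫₀^∞ (A(t) + I(t)) dt = Γ·R∞, where Γ = (σ + r̂)/(r̂·(σ + μ)). -/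
open MeasureTheory Filter

/-- Section 3.1: with `I' = σ·A − r̂·I`, `R' = μ·A + r̂·I`, `R(0) = 0`,
`I(0) = 0`, `I(t) → 0` and `R(t) → R∞`, the cumulative infection burden is
`∫₀^∞ (A + I) = Γ·R∞` with `Γ = (σ + r̂)/(r̂·(σ + μ))`. -/
theorem integral_A_add_I_eq_Gamma_mul_final_size
    (σ μ rhat : ℝ) (hσ : 0 < σ) (hμ : 0 ≤ μ) (hr : 0 < rhat)
    (A I R : ℝ → ℝ) (Rinf : ℝ)
    (hAc : ContinuousOn A (Set.Ici 0))
    (hIc : ContinuousOn I (Set.Ici 0))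
    (hRc : ContinuousOn R (Set.Ici 0))
    (hAint : IntegrableOn A (Set.Ici 0))
    (hIint : IntegrableOn I (Set.Ici 0))
    (hI' : ∀ t : ℝ, 0 ≤ t → HasDerivAt I (σ * A t - rhat * I t) t)
    (hR' : ∀ t : ℝ, 0 ≤ t → HasDerivAt R (μ * A t + rhat * I t) t)
    (hR0 : R 0 = 0)
    (hI0 : I 0 = 0)
    (hIlim : Tendsto I atTop (nhds 0))
    (hRlim : Tendsto R atTop (nhds Rinf)) :
    ∫ t in Set.Ici (0:ℝ), (A t + I t)
      = ((σ + rhat) / (rhat * (σ + μ))) * Rinf := by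
  have hAint' : IntegrableOn A (Set.Ioi 0) := hAint.mono_set Set.Ioi_subset_Ici_self
  have hIint' : IntegrableOn I (Set.Ioi 0) := hIint.mono_set Set.Ioi_subset_Ici_self
  set a := ∫ t in Set.Ioi (0:ℝ), A t with ha
  set i := ∫ t in Set.Ioi (0:ℝ), I t with hi
  have h1 : ∫ t in Set.Ioi (0:ℝ), (σ * A t - rhat * I t) = 0 - I 0 := by
    apply integral_Ioi_of_hasDerivAt_of_tendsto
    · exact (hIc 0 (by simp)).mono (by simp [subset_rfl])
    · exact fun x hx => hI' x (le_of_lt hx)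
    · exact ((hAint'.const_mul σ).sub (hIint'.const_mul rhat))
    · exact hIlim
  have h2 : ∫ t in Set.Ioi (0:ℝ), (μ * A t + rhat * I t) = Rinf - R 0 := by
    apply integral_Ioi_of_hasDerivAt_of_tendsto
    · exact (hRc 0 (by simp)).mono (by simp [subset_rfl])
    · exact fun x hx => hR' x (le_of_lt hx)
    · exact ((hAint'.const_mul μ).add (hIint'.const_mul rhat))
    · exact hRlim
  rw [integral_sub (hAint'.const_mul σ) (hIint'.const_mul rhat),
    integral_const_mul, integral_const_mul, hI0] at h1
  rw [integral_add (hAint'.const_mul μ) (hIint'.const_mul rhat),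
    integral_const_mul, integral_const_mul, hR0] at h2
  have key : a + i = ((σ + rhat) / (rhat * (σ + μ))) * Rinf := by
    have h1' : σ * a - rhat * i = 0 := by simpa using h1
    have h2' : μ * a + rhat * i = Rinf := by simpa using h2
    have hden : rhat * (σ + μ) ≠ 0 := by positivity
    field_simp
    nlinarith [h1', h2']
  rw [integral_Ici_eq_integral_Ioi,
    integral_add hAint' hIint']
  exact key
end
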